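/- With the cost C(δ;v) and subdivision ψ as above, and V_U = sup v < ∞, σ̄ = σ(1/(4L), P/(8L)), one has for every admissible δ and every index j: C(ψ[δ;j];v) − C(δ;v) ≤ (min_i ρ_i)^{−d_R−d_F/2} (2·4^{d_R+d_F+2} σ̄ V_U T^{d_F} / ρ_j^{d_F/2+1} + 4^{d_R+1} σ̄ V_U / ((2LP)^{d_F/2} ρ_j) + 4^{d_F+2} σ̄ V_U T^{d_F} / ρ_j^{d_F/2+1}). -/

import Mathlib

noncomputable def sigmaFun (L h ρ : ℝ) : ℝ := (ρ/4) * (1 + L*h) * ((1 + L*h)/(1 - L*h) + 6)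

/-- temporal nodes: t_k = h_1 + ... + h_k (0-based steps). -/
noncomputable def tnode (h : ℕ → ℝ) (k : ℕ) : ℝ := ∑ j ∈ Finset.range k, h j

/-- The cost estimator C(δ;v). -/
noncomputable def costC (L : ℝ) (dR dF : ℕ) (v : ℝ → ℝ) (n : ℕ) (h ρ : ℕ → ℝ) : ℝ :=
  ∑ k ∈ Finset.range n,
    4 * v (tnode h k) * (h k)^dF * sigmaFun L (h k) (ρ k) /
      ((ρ k)^dR * (min (ρ k) (ρ (k+1)))^(dF+1))

/-- step sizes after halving the step with 0-based index i₀. -/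
noncomputable def subh (h : ℕ → ℝ) (i₀ : ℕ) : ℕ → ℝ := fun i =>
  if i < i₀ then h i else if i ≤ i₀ + 1 then h i₀ / 2 else h (i-1)

/-- mesh sizes after quartering ρ_j into two copies (j ≥ 1). -/
noncomputable def subρ (ρ : ℕ → ℝ) (j : ℕ) : ℕ → ℝ := fun k =>
  if k < j then ρ k else if k ≤ j + 1 then ρ j / 4 else ρ (k-1)

/-- mesh sizes after quartering only ρ₀ (subdivision index j = 0). -/
noncomputable def subρ0 (ρ : ℕ → ℝ) : ℕ → ℝ := fun k => if k = 0 then ρ 0 / 4 else ρ k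

/-- cost of the discretization subdivided at index j. -/
noncomputable def costCsub (L : ℝ) (dR dF : ℕ) (v : ℝ → ℝ) (n : ℕ) (h ρ : ℕ → ℝ)
    (j : ℕ) : ℝ :=
  if j = 0 then costC L dR dF v n h (subρ0 ρ)
  else costC L dR dF v (n+1) (subh h (j-1)) (subρ ρ j)

/-!
Subdividing at `j` changes at most three summands of the cost: the one of the step before `ρ_j`
(its step is halved and its right mesh size quartered), the summand of the inserted step, and
the one of the step after `ρ_j` (its left mesh size is quartered); for `j = 0` only the first
summand changes. Each new summand is bounded according to which mesh size realises
`min(ρ_k, ρ_{k+1})`. If it is `ρ_j / 4`, the factors `ρ^{-d_R}` and `ρ_j^{-(d_F+1)}` are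
traded for `(min ρ)^{-d_R-d_F/2} ρ_j^{-(d_F/2+1)}`. If it is a neighbour `ρ_{j+1} < ρ_j / 4`,
the coupling `ρ_{j+1} = 2LP h_j²` rewrites `h_j^{d_F}` as `(ρ_{j+1} / 2LP)^{d_F/2}`, which
cancels half of `ρ_{j+1}^{-(d_F+1)}`. If the left neighbour `ρ_{j-1} < ρ_j / 4` is the minimum,
the summand of the halved step does not grow.
-/

open Finset Set

noncomputable def sigmaBar (L P : ℝ) : ℝ := sigmaFun L (1 / (4 * L)) (P / (8 * L))

noncomputable def costTerm (L : ℝ) (dR dF : ℕ) (w x a b : ℝ) : ℝ :=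
  4 * w * x ^ dF * sigmaFun L x a / (a ^ dR * min a b ^ (dF + 1))

lemma costC_eq_sum (L : ℝ) (dR dF : ℕ) (v : ℝ → ℝ) (n : ℕ) (h ρ : ℕ → ℝ) :
    costC L dR dF v n h ρ =
      ∑ k ∈ range n, costTerm L dR dF (v (tnode h k)) (h k) (ρ k) (ρ (k + 1)) := rfl

lemma sigmaFun_mono {L x x' a a' : ℝ} (hL : 0 ≤ L) (hx : 0 ≤ x) (hxx' : x ≤ x')
    (hx' : L * x' < 1) (ha : 0 ≤ a) (haa' : a ≤ a') :
    sigmaFun L x a ≤ sigmaFun L x' a' := by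
  have hLx : L * x ≤ L * x' := mul_le_mul_of_nonneg_left hxx' hL
  have hLx0 : 0 ≤ L * x := by positivity
  have hfrac : (1 + L * x) / (1 - L * x) ≤ (1 + L * x') / (1 - L * x') := by
    rw [div_le_div_iff₀ (by linarith) (by linarith)]
    nlinarith
  have hfrac0 : 0 ≤ (1 + L * x) / (1 - L * x) := div_nonneg (by linarith) (by linarith)
  have hx'0 : 0 ≤ x' := hx.trans hxx'
  have ha'0 : 0 ≤ a' := ha.trans haa'
  unfold sigmaFun
  gcongr

lemma sigmaFun_nonneg {L x a : ℝ} (hL : 0 ≤ L) (hx : 0 ≤ x) (hLx : L * x < 1) (ha : 0 ≤ a) :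
    0 ≤ sigmaFun L x a := by
  simpa [sigmaFun] using sigmaFun_mono hL hx le_rfl hLx le_rfl ha

lemma mul_lt_one_of_le_one_div_four_mul {L x : ℝ} (hL : 0 < L) (hx : x ≤ 1 / (4 * L)) :
    L * x < 1 :=
  calc L * x ≤ L * (1 / (4 * L)) := by gcongr
    _ = 1 / 4 := by field_simp
    _ < 1 := by norm_num

lemma sigmaFun_le_sigmaBar {L P x a : ℝ} (hL : 0 < L) (hx : x ∈ Icc 0 (1 / (4 * L)))
    (ha : a ∈ Icc 0 (P / (8 * L))) : sigmaFun L x a ≤ sigmaBar L P :=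
  sigmaFun_mono hL.le hx.1 hx.2 (mul_lt_one_of_le_one_div_four_mul hL le_rfl) ha.1 ha.2

lemma sigmaBar_nonneg {L P : ℝ} (hL : 0 < L) (hP : 0 ≤ P / (8 * L)) : 0 ≤ sigmaBar L P :=
  sigmaFun_nonneg hL.le (by positivity) (mul_lt_one_of_le_one_div_four_mul hL le_rfl) hP

lemma rpow_neg_natCast_sub_half {m : ℝ} (hm : 0 < m) (dR dF : ℕ) :
    m ^ (-(dR : ℝ) - dF / 2) = (m ^ dR * m ^ ((dF : ℝ) / 2))⁻¹ := by
  rw [show -(dR : ℝ) - dF / 2 = -(dR + dF / 2) by ring, Real.rpow_neg hm.le,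
    Real.rpow_add hm, Real.rpow_natCast]

lemma rpow_half_mul_rpow_half_add_one {x : ℝ} (hx : 0 < x) (dF : ℕ) :
    x ^ ((dF : ℝ) / 2) * x ^ ((dF : ℝ) / 2 + 1) = x ^ (dF + 1) := by
  rw [← Real.rpow_add hx, ← Real.rpow_natCast]
  push_cast
  ring_nf

lemma pow_eq_rpow_half_div {c x : ℝ} (hc : 0 < c) (hx : 0 ≤ x) (dF : ℕ) :
    x ^ dF = (c * x ^ 2) ^ ((dF : ℝ) / 2) / c ^ ((dF : ℝ) / 2) := by
  rw [Real.mul_rpow hc.le (by positivity), ← Real.rpow_natCast x 2, ← Real.rpow_mul hx,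
    mul_div_cancel_left₀ _ (by positivity)]
  push_cast
  rw [show (2 : ℝ) * (dF / 2) = dF by ring, Real.rpow_natCast]

lemma inv_pow_mul_pow_succ_le {m a q : ℝ} (dR dF : ℕ) (hm : 0 < m) (ha : m ≤ a) (hq : m ≤ q) :
    (a ^ dR * q ^ (dF + 1))⁻¹ ≤ m ^ (-(dR : ℝ) - dF / 2) / q ^ ((dF : ℝ) / 2 + 1) := by
  have ha0 : 0 < a := hm.trans_le ha
  have hq0 : 0 < q := hm.trans_le hq
  have key : m ^ dR * m ^ ((dF : ℝ) / 2) * q ^ ((dF : ℝ) / 2 + 1) ≤ a ^ dR * q ^ (dF + 1) := by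
    rw [← rpow_half_mul_rpow_half_add_one hq0, ← mul_assoc]
    gcongr
  rw [rpow_neg_natCast_sub_half hm, inv_div_left, mul_comm (q ^ _)]
  exact inv_anti₀ (by positivity) key

lemma inv_pow_mul_rpow_le {m q b : ℝ} {dR : ℕ} (dF : ℕ) (hdR : 1 ≤ dR) (hm : 0 < m) (hq : m ≤ q)
    (hb : m ≤ b) :
    (q ^ dR * b ^ ((dF : ℝ) / 2 + 1))⁻¹ ≤ m ^ (-(dR : ℝ) - dF / 2) / q := by
  obtain ⟨d, rfl⟩ : ∃ d, dR = d + 1 := ⟨dR - 1, by omega⟩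
  have hq0 : 0 < q := hm.trans_le hq
  have key : m ^ (d + 1) * m ^ ((dF : ℝ) / 2) * q ≤ q ^ (d + 1) * b ^ ((dF : ℝ) / 2 + 1) :=
    calc m ^ (d + 1) * m ^ ((dF : ℝ) / 2) * q = m ^ d * q * m ^ ((dF : ℝ) / 2 + 1) := by
          rw [Real.rpow_add_one hm.ne']; ring
      _ ≤ q ^ d * q * b ^ ((dF : ℝ) / 2 + 1) := by gcongr
      _ = q ^ (d + 1) * b ^ ((dF : ℝ) / 2 + 1) := by ring
  rw [rpow_neg_natCast_sub_half hm, inv_div_left, mul_comm q]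
  exact inv_anti₀ (by positivity) key

lemma div_pow_mul_quarter_pow_le {m a q K : ℝ} (dR dF : ℕ) (hm : 0 < m) (ha : m ≤ a)
    (hq : m ≤ q) (hK : 0 ≤ K) :
    K / (a ^ dR * (q / 4) ^ (dF + 1)) ≤
      m ^ (-(dR : ℝ) - dF / 2) * (4 ^ (dF + 1) * K / q ^ ((dF : ℝ) / 2 + 1)) :=
  calc K / (a ^ dR * (q / 4) ^ (dF + 1)) = 4 ^ (dF + 1) * K * (a ^ dR * q ^ (dF + 1))⁻¹ := by
        rw [div_pow]; field_simp
    _ ≤ 4 ^ (dF + 1) * K * (m ^ (-(dR : ℝ) - dF / 2) / q ^ ((dF : ℝ) / 2 + 1)) := by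
        gcongr; exact inv_pow_mul_pow_succ_le dR dF hm ha hq
    _ = _ := by ring

lemma costTerm_nonneg {L w x a b : ℝ} (dR dF : ℕ) (hL : 0 < L) (hw : 0 ≤ w)
    (hx : x ∈ Icc 0 (1 / (4 * L))) (ha : 0 < a) (hb : 0 < b) :
    0 ≤ costTerm L dR dF w x a b := by
  have := sigmaFun_nonneg hL.le hx.1 (mul_lt_one_of_le_one_div_four_mul hL hx.2) ha.le
  have := hx.1
  unfold costTerm
  positivity

lemma costTerm_le {L P V w x a b : ℝ} (dR dF : ℕ) (hL : 0 < L) (hw : w ∈ Icc 0 V)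
    (hx : x ∈ Icc 0 (1 / (4 * L))) (ha : a ∈ Ioc 0 (P / (8 * L))) (hb : 0 < b) :
    costTerm L dR dF w x a b ≤ 4 * V * sigmaBar L P * x ^ dF / (a ^ dR * min a b ^ (dF + 1)) := by
  obtain ⟨hw0, hwV⟩ := hw
  have hV : 0 ≤ V := hw0.trans hwV
  have hσ0 := sigmaFun_nonneg hL.le hx.1 (mul_lt_one_of_le_one_div_four_mul hL hx.2) ha.1.le
  have hσ := sigmaFun_le_sigmaBar hL hx ⟨ha.1.le, ha.2⟩
  have := hx.1
  have := ha.1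
  unfold costTerm
  gcongr ?_ / _
  calc 4 * w * x ^ dF * sigmaFun L x a ≤ 4 * V * x ^ dF * sigmaBar L P := by gcongr
    _ = 4 * V * sigmaBar L P * x ^ dF := by ring

lemma costTerm_quarter_le_of_quarter_le {L P T V m w x q b : ℝ} (dR dF : ℕ) (hL : 0 < L)
    (hw : w ∈ Icc 0 V) (hx : x ∈ Icc 0 (1 / (4 * L))) (hxT : x ≤ T) (hm : 0 < m)
    (hq : q ∈ Icc m (P / (8 * L))) (hqb : q / 4 ≤ b) :
    costTerm L dR dF w x (q / 4) b ≤
      m ^ (-(dR : ℝ) - dF / 2) * (4 ^ (dR + dF + 2) * sigmaBar L P * V * T ^ dF /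
        q ^ ((dF : ℝ) / 2 + 1)) := by
  have hq0 : 0 < q := hm.trans_le hq.1
  have hS := sigmaBar_nonneg hL (by linarith [hq.2] : 0 ≤ P / (8 * L))
  have hV : 0 ≤ V := hw.1.trans hw.2
  have hx0 := hx.1
  have hT : 0 ≤ T := hx0.trans hxT
  calc costTerm L dR dF w x (q / 4) b
      ≤ 4 * V * sigmaBar L P * x ^ dF / ((q / 4) ^ dR * (q / 4) ^ (dF + 1)) := by
        simpa [min_eq_left hqb] using
          costTerm_le (P := P) (a := q / 4) dR dF hL hw hx ⟨by positivity, by linarith [hq.2]⟩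
            (by linarith : 0 < b)
    _ ≤ 4 ^ dR * (4 * V * sigmaBar L P * T ^ dF) / (q ^ dR * (q / 4) ^ (dF + 1)) := by
        rw [div_pow q, div_pow q]
        field_simp
        gcongr
    _ ≤ _ := div_pow_mul_quarter_pow_le dR dF hm hq.1 hq.1 (by positivity)
    _ = _ := by ring

lemma costTerm_quarter_le_of_le_quarter {L P V m c w x q b : ℝ} {dR : ℕ} (dF : ℕ) (hdR : 1 ≤ dR)
    (hL : 0 < L) (hw : w ∈ Icc 0 V) (hx : x ∈ Icc 0 (1 / (4 * L))) (hm : 0 < m)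
    (hq : q ∈ Icc m (P / (8 * L))) (hc : 0 < c) (hmb : m ≤ b) (hbq : b ≤ q / 4)
    (hb : b = c * x ^ 2) :
    costTerm L dR dF w x (q / 4) b ≤
      m ^ (-(dR : ℝ) - dF / 2) * (4 ^ (dR + 1) * sigmaBar L P * V /
        (c ^ ((dF : ℝ) / 2) * q)) := by
  have hq0 : 0 < q := hm.trans_le hq.1
  have hb0 : 0 < b := hm.trans_le hmb
  have hS := sigmaBar_nonneg hL (by linarith [hq.2] : 0 ≤ P / (8 * L))
  have hV : 0 ≤ V := hw.1.trans hw.2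
  calc costTerm L dR dF w x (q / 4) b
      ≤ 4 * V * sigmaBar L P * x ^ dF / ((q / 4) ^ dR * b ^ (dF + 1)) := by
        simpa [min_eq_right hbq] using
          costTerm_le (P := P) (a := q / 4) dR dF hL hw hx ⟨by positivity, by linarith [hq.2]⟩ hb0
    _ = 4 ^ (dR + 1) * sigmaBar L P * V / c ^ ((dF : ℝ) / 2) *
          (q ^ dR * b ^ ((dF : ℝ) / 2 + 1))⁻¹ := by
        rw [pow_eq_rpow_half_div hc hx.1, ← hb, ← rpow_half_mul_rpow_half_add_one hb0, div_pow]
        field_simp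
        ring
    _ ≤ 4 ^ (dR + 1) * sigmaBar L P * V / c ^ ((dF : ℝ) / 2) *
          (m ^ (-(dR : ℝ) - dF / 2) / q) := by
        gcongr
        exact inv_pow_mul_rpow_le dF hdR hm hq.1 hmb
    _ = _ := by ring

lemma costTerm_quarter_le {L P T V m c w x q b : ℝ} {dR : ℕ} (dF : ℕ) (hdR : 1 ≤ dR)
    (hL : 0 < L) (hw : w ∈ Icc 0 V) (hx : x ∈ Icc 0 (1 / (4 * L))) (hxT : x ≤ T) (hm : 0 < m)
    (hq : q ∈ Icc m (P / (8 * L))) (hc : 0 < c) (hmb : m ≤ b) (hb : b = c * x ^ 2) :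
    costTerm L dR dF w x (q / 4) b ≤
      m ^ (-(dR : ℝ) - dF / 2) * (4 ^ (dR + dF + 2) * sigmaBar L P * V * T ^ dF /
        q ^ ((dF : ℝ) / 2 + 1)) +
      m ^ (-(dR : ℝ) - dF / 2) * (4 ^ (dR + 1) * sigmaBar L P * V /
        (c ^ ((dF : ℝ) / 2) * q)) := by
  have hq0 : 0 < q := hm.trans_le hq.1
  have hS := sigmaBar_nonneg hL (by linarith [hq.2] : 0 ≤ P / (8 * L))
  have hV : 0 ≤ V := hw.1.trans hw.2
  have hT : 0 ≤ T := hx.1.trans hxT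
  rcases le_total (q / 4) b with hqb | hbq
  · have := costTerm_quarter_le_of_quarter_le dR dF hL hw hx hxT hm hq hqb
    have : 0 ≤ m ^ (-(dR : ℝ) - dF / 2) * (4 ^ (dR + 1) * sigmaBar L P * V /
        (c ^ ((dF : ℝ) / 2) * q)) := by positivity
    linarith
  · have := costTerm_quarter_le_of_le_quarter dF hdR hL hw hx hm hq hc hmb hbq hb
    have : 0 ≤ m ^ (-(dR : ℝ) - dF / 2) * (4 ^ (dR + dF + 2) * sigmaBar L P * V * T ^ dF /
        q ^ ((dF : ℝ) / 2 + 1)) := by positivity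
    linarith

lemma costTerm_half_le_of_quarter_le {L P T V m w x a q : ℝ} (dR dF : ℕ) (hL : 0 < L)
    (hw : w ∈ Icc 0 V) (hx : x ∈ Icc 0 (1 / (4 * L))) (hxT : x ≤ T) (hm : 0 < m)
    (ha : a ∈ Icc m (P / (8 * L))) (hq : m ≤ q) (hqa : q / 4 ≤ a) :
    costTerm L dR dF w (x / 2) a (q / 4) ≤
      m ^ (-(dR : ℝ) - dF / 2) * (4 ^ (dF + 2) * sigmaBar L P * V * T ^ dF /
        q ^ ((dF : ℝ) / 2 + 1)) := by
  have ha0 : 0 < a := hm.trans_le ha.1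
  have hq0 : 0 < q := hm.trans_le hq
  have hS := sigmaBar_nonneg hL (by linarith [ha.2] : 0 ≤ P / (8 * L))
  have hV : 0 ≤ V := hw.1.trans hw.2
  have hx0 := hx.1
  have hT : 0 ≤ T := hx0.trans hxT
  calc costTerm L dR dF w (x / 2) a (q / 4)
      ≤ 4 * V * sigmaBar L P * (x / 2) ^ dF / (a ^ dR * (q / 4) ^ (dF + 1)) := by
        simpa [min_eq_right hqa] using
          costTerm_le (P := P) (b := q / 4) dR dF hL hw ⟨by linarith, by linarith [hx.2]⟩
            ⟨ha0, ha.2⟩ (by positivity)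
    _ ≤ 4 * V * sigmaBar L P * T ^ dF / (a ^ dR * (q / 4) ^ (dF + 1)) := by
        gcongr
        linarith
    _ ≤ _ := div_pow_mul_quarter_pow_le dR dF hm ha.1 hq (by positivity)
    _ = _ := by ring

lemma costTerm_half_le_costTerm {L w x a q : ℝ} (dR dF : ℕ) (hL : 0 < L) (hw : 0 ≤ w)
    (hx : x ∈ Icc 0 (1 / (4 * L))) (ha : 0 < a) (haq : a ≤ q / 4) :
    costTerm L dR dF w (x / 2) a (q / 4) ≤ costTerm L dR dF w x a q := by
  have hx0 := hx.1
  unfold costTerm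
  rw [min_eq_left haq, min_eq_left (by linarith)]
  gcongr
  · exact sigmaFun_nonneg hL.le (by positivity)
      (mul_lt_one_of_le_one_div_four_mul hL (by linarith [hx.2])) ha.le
  · linarith
  · exact sigmaFun_mono hL.le (by positivity) (by linarith)
      (mul_lt_one_of_le_one_div_four_mul hL hx.2) ha.le le_rfl

lemma costTerm_half_sub_le {L P T V m w x a q : ℝ} (dR dF : ℕ) (hL : 0 < L) (hw : w ∈ Icc 0 V)
    (hx : x ∈ Icc 0 (1 / (4 * L))) (hxT : x ≤ T) (hm : 0 < m) (ha : a ∈ Icc m (P / (8 * L)))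
    (hq : m ≤ q) :
    costTerm L dR dF w (x / 2) a (q / 4) - costTerm L dR dF w x a q ≤
      m ^ (-(dR : ℝ) - dF / 2) * (4 ^ (dF + 2) * sigmaBar L P * V * T ^ dF /
        q ^ ((dF : ℝ) / 2 + 1)) := by
  have ha0 : 0 < a := hm.trans_le ha.1
  rcases le_total (q / 4) a with hqa | haq
  · have := costTerm_half_le_of_quarter_le dR dF hL hw hx hxT hm ha hq hqa
    have := costTerm_nonneg dR dF hL hw.1 hx ha0 (hm.trans_le hq)
    linarith
  · have := costTerm_half_le_costTerm dR dF hL hw.1 hx ha0 haq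
    have hS := sigmaBar_nonneg hL (by linarith [ha.2] : 0 ≤ P / (8 * L))
    have hV : 0 ≤ V := hw.1.trans hw.2
    have hT : 0 ≤ T := hx.1.trans hxT
    have hq0 : 0 < q := hm.trans_le hq
    have : 0 ≤ m ^ (-(dR : ℝ) - dF / 2) * (4 ^ (dF + 2) * sigmaBar L P * V * T ^ dF /
        q ^ ((dF : ℝ) / 2 + 1)) := by positivity
    linarith

lemma tnode_succ (h : ℕ → ℝ) (k : ℕ) : tnode h (k + 1) = tnode h k + h k :=
  sum_range_succ h k

lemma tnode_mem_Icc {h : ℕ → ℝ} {n k : ℕ} {T : ℝ} (hpos : ∀ j < n, 0 < h j)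
    (hsum : ∑ j ∈ range n, h j = T) (hk : k ≤ n) : tnode h k ∈ Icc 0 T := by
  have hnn : ∀ j ∈ range n, 0 ≤ h j := fun j hj => (hpos j (mem_range.mp hj)).le
  refine ⟨sum_nonneg fun j hj => hnn j (range_subset_range.mpr hk hj), ?_⟩
  rw [← hsum]
  exact sum_le_sum_of_subset_of_nonneg (range_subset_range.mpr hk) fun j hj _ => hnn j hj

section Subdivision

variable (h ρ : ℕ → ℝ) (i : ℕ)

lemma subh_of_lt {k : ℕ} (hk : k < i) : subh h i k = h k := if_pos hk

lemma subh_self : subh h i i = h i / 2 := by simp [subh]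

lemma subh_succ : subh h i (i + 1) = h i / 2 := by simp [subh]

lemma subh_succ_of_le {k : ℕ} (hk : i + 1 ≤ k) : subh h i (k + 1) = h k := by
  simp [subh, show ¬ k + 1 < i by omega, show ¬ k + 1 ≤ i + 1 by omega]

lemma subρ_of_lt {k : ℕ} (hk : k < i) : subρ ρ i k = ρ k := if_pos hk

lemma subρ_self : subρ ρ i i = ρ i / 4 := by simp [subρ]

lemma subρ_succ : subρ ρ i (i + 1) = ρ i / 4 := by simp [subρ]

lemma subρ_succ_of_le {k : ℕ} (hk : i + 1 ≤ k) : subρ ρ i (k + 1) = ρ k := by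
  simp [subρ, show ¬ k + 1 < i by omega, show ¬ k + 1 ≤ i + 1 by omega]

lemma tnode_subh_of_le {k : ℕ} (hk : k ≤ i) : tnode (subh h i) k = tnode h k :=
  sum_congr rfl fun j hj => subh_of_lt h i (by have := mem_range.mp hj; omega)

lemma tnode_subh_succ : tnode (subh h i) (i + 1) = tnode h i + h i / 2 := by
  rw [tnode_succ, tnode_subh_of_le h i le_rfl, subh_self]

lemma tnode_subh_succ_of_le {k : ℕ} (hk : i + 1 ≤ k) : tnode (subh h i) (k + 1) = tnode h k := by
  induction k, hk using Nat.le_induction with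
  | base => rw [tnode_succ, tnode_subh_succ, subh_succ, tnode_succ]; ring
  | succ k hk ih => rw [tnode_succ, ih, subh_succ_of_le h i (by omega), tnode_succ]

end Subdivision

lemma sum_range_succ_sub_sum_range {M : Type*} [AddCommGroup M] {f g : ℕ → M} {n i : ℕ}
    (hi : i < n) (hlow : ∀ k < i, g k = f k) (hhigh : ∀ k, i + 2 ≤ k → g (k + 1) = f k) :
    ∑ k ∈ range (n + 1), g k - ∑ k ∈ range n, f k =
      (g i - f i) + g (i + 1) + if i + 1 < n then g (i + 2) - f (i + 1) else 0 := by
  have hg : ∑ k ∈ range (n + 1), g k =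
      ∑ k ∈ range i, g k + g i + g (i + 1) + ∑ k ∈ Ico (i + 1) n, g (k + 1) := by
    rw [sum_Ico_add' g, ← sum_range_add_sum_Ico _ (by omega : i + 2 ≤ n + 1),
      sum_range_succ, sum_range_succ]
  have hf : ∑ k ∈ range n, f k = ∑ k ∈ range i, f k + f i + ∑ k ∈ Ico (i + 1) n, f k := by
    rw [← sum_range_add_sum_Ico _ (by omega : i + 1 ≤ n), sum_range_succ]
  have htail : ∑ k ∈ Ico (i + 1) n, (g (k + 1) - f k) =
      if i + 1 < n then g (i + 2) - f (i + 1) else 0 := by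
    split_ifs with hin
    · refine sum_eq_single_of_mem (i + 1) (mem_Ico.mpr ⟨le_rfl, hin⟩) fun k hk hki => ?_
      rw [hhigh k (by have := (mem_Ico.mp hk).1; omega), sub_self]
    · rw [Finset.Ico_eq_empty (by omega), sum_empty]
  rw [hg, hf, ← htail, sum_sub_distrib, sum_congr rfl fun k hk => hlow k (mem_range.mp hk)]
  abel

lemma costC_subρ0_sub (L : ℝ) (dR dF : ℕ) (v : ℝ → ℝ) {n : ℕ} (h ρ : ℕ → ℝ) (hn : 0 < n) :
    costC L dR dF v n h (subρ0 ρ) - costC L dR dF v n h ρ =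
      costTerm L dR dF (v (tnode h 0)) (h 0) (ρ 0 / 4) (ρ 1) -
        costTerm L dR dF (v (tnode h 0)) (h 0) (ρ 0) (ρ 1) := by
  rw [costC_eq_sum, costC_eq_sum, ← sum_sub_distrib]
  refine (sum_eq_single_of_mem 0 (mem_range.mpr hn) fun k _ hk => ?_).trans ?_
  · simp [subρ0, hk]
  · simp [subρ0]

lemma costC_subdivide_sub (L : ℝ) (dR dF : ℕ) (v : ℝ → ℝ) {n i : ℕ} (h ρ : ℕ → ℝ) (hi : i < n) :
    costC L dR dF v (n + 1) (subh h i) (subρ ρ (i + 1)) - costC L dR dF v n h ρ =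
      (costTerm L dR dF (v (tnode h i)) (h i / 2) (ρ i) (ρ (i + 1) / 4) -
          costTerm L dR dF (v (tnode h i)) (h i) (ρ i) (ρ (i + 1))) +
        costTerm L dR dF (v (tnode h i + h i / 2)) (h i / 2) (ρ (i + 1) / 4) (ρ (i + 1) / 4) +
        if i + 1 < n then
          costTerm L dR dF (v (tnode h (i + 1))) (h (i + 1)) (ρ (i + 1) / 4) (ρ (i + 2)) -
            costTerm L dR dF (v (tnode h (i + 1))) (h (i + 1)) (ρ (i + 1)) (ρ (i + 2))
        else 0 := by
  rw [costC_eq_sum, costC_eq_sum, sum_range_succ_sub_sum_range hi]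
  · rw [subh_self, subh_succ, subh_succ_of_le h i le_rfl, subρ_of_lt ρ _ (Nat.lt_succ_self i),
      subρ_self, subρ_succ, subρ_succ_of_le ρ _ le_rfl, tnode_subh_of_le h i le_rfl,
      tnode_subh_succ, tnode_subh_succ_of_le h i le_rfl]
  · intro k hk
    rw [subh_of_lt h i hk, subρ_of_lt ρ _ (by omega), subρ_of_lt ρ _ (by omega),
      tnode_subh_of_le h i hk.le]
  · intro k hk
    rw [subh_succ_of_le h i (by omega), subρ_succ_of_le ρ _ (by omega),
      subρ_succ_of_le ρ _ (by omega), tnode_subh_succ_of_le h i (by omega)]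

noncomputable def costIncreaseBound (L P T V : ℝ) (dR dF : ℕ) (m q : ℝ) : ℝ :=
  m ^ (-(dR : ℝ) - dF / 2) *
    (2 * 4 ^ (dR + dF + 2) * sigmaBar L P * V * T ^ dF / q ^ ((dF : ℝ) / 2 + 1) +
      4 ^ (dR + 1) * sigmaBar L P * V / ((2 * L * P) ^ ((dF : ℝ) / 2) * q) +
      4 ^ (dF + 2) * sigmaBar L P * V * T ^ dF / q ^ ((dF : ℝ) / 2 + 1))

lemma costIncreaseBound_eq (L P T V : ℝ) (dR dF : ℕ) (m q : ℝ) :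
    costIncreaseBound L P T V dR dF m q =
      (m ^ (-(dR : ℝ) - dF / 2) * (4 ^ (dF + 2) * sigmaBar L P * V * T ^ dF /
          q ^ ((dF : ℝ) / 2 + 1)) +
        m ^ (-(dR : ℝ) - dF / 2) * (4 ^ (dR + dF + 2) * sigmaBar L P * V * T ^ dF /
          q ^ ((dF : ℝ) / 2 + 1))) +
      (m ^ (-(dR : ℝ) - dF / 2) * (4 ^ (dR + dF + 2) * sigmaBar L P * V * T ^ dF /
          q ^ ((dF : ℝ) / 2 + 1)) +
        m ^ (-(dR : ℝ) - dF / 2) * (4 ^ (dR + 1) * sigmaBar L P * V /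
          ((2 * L * P) ^ ((dF : ℝ) / 2) * q))) := by
  unfold costIncreaseBound
  ring

lemma tnode_add_le_of_mem_Icc {h : ℕ → ℝ} {n k : ℕ} {T : ℝ}
    (hnode : ∀ k ≤ n, tnode h k ∈ Icc 0 T) (hk : k < n) : tnode h k + h k ≤ T :=
  tnode_succ h k ▸ (hnode (k + 1) hk).2

section CostIncrease

variable {L P T V m : ℝ} {dR dF n : ℕ} {v : ℝ → ℝ} {h ρ : ℕ → ℝ}

lemma costCsub_zero_sub_le (hdR : 1 ≤ dR) (hL : 0 < L) (hP : 0 < P) (hm : 0 < m)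
    (hv : ∀ t ∈ Icc 0 T, v t ∈ Icc 0 V) (hh : ∀ k < n, h k ∈ Icc 0 (1 / (4 * L)))
    (hnode : ∀ k ≤ n, tnode h k ∈ Icc 0 T) (hρ : ∀ k ≤ n, ρ k ∈ Icc m (P / (8 * L)))
    (hcoup : ∀ k < n, ρ (k + 1) = 2 * L * P * h k ^ 2) :
    costCsub L dR dF v n h ρ 0 - costC L dR dF v n h ρ ≤
      costIncreaseBound L P T V dR dF m (ρ 0) := by
  have hT : 0 ≤ T := (hnode 0 (Nat.zero_le n)).2
  have hV : 0 ≤ V := (hv 0 ⟨le_rfl, hT⟩).1.trans (hv 0 ⟨le_rfl, hT⟩).2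
  have hq0 : 0 < ρ 0 := hm.trans_le (hρ 0 (Nat.zero_le n)).1
  have hS := sigmaBar_nonneg hL (by positivity : 0 ≤ P / (8 * L))
  rw [costIncreaseBound_eq]
  rcases Nat.eq_zero_or_pos n with rfl | hn
  · simp only [costCsub, costC, if_pos, range_zero, sum_empty, sub_self]
    positivity
  have hh0T : h 0 ≤ T := by linarith [tnode_add_le_of_mem_Icc hnode hn, (hnode 0 hn.le).1]
  have hnew := costTerm_quarter_le dF hdR hL (hv _ (hnode 0 hn.le)) (hh 0 hn) hh0T hm
    (hρ 0 hn.le) (by positivity) (hρ 1 hn).1 (hcoup 0 hn)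
  have hold := costTerm_nonneg dR dF hL (hv _ (hnode 0 hn.le)).1 (hh 0 hn) hq0
    (hm.trans_le (hρ 1 hn).1)
  rw [costCsub, if_pos rfl, costC_subρ0_sub L dR dF v h ρ hn]
  exact le_add_of_nonneg_of_le (by positivity) (by linarith)

lemma costCsub_succ_sub_le {i : ℕ} (hdR : 1 ≤ dR) (hL : 0 < L) (hP : 0 < P) (hm : 0 < m)
    (hv : ∀ t ∈ Icc 0 T, v t ∈ Icc 0 V) (hh : ∀ k < n, h k ∈ Icc 0 (1 / (4 * L)))
    (hnode : ∀ k ≤ n, tnode h k ∈ Icc 0 T) (hρ : ∀ k ≤ n, ρ k ∈ Icc m (P / (8 * L)))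
    (hcoup : ∀ k < n, ρ (k + 1) = 2 * L * P * h k ^ 2) (hi : i + 1 ≤ n) :
    costCsub L dR dF v n h ρ (i + 1) - costC L dR dF v n h ρ ≤
      costIncreaseBound L P T V dR dF m (ρ (i + 1)) := by
  have hT : 0 ≤ T := (hnode 0 (Nat.zero_le n)).2
  have hV : 0 ≤ V := (hv 0 ⟨le_rfl, hT⟩).1.trans (hv 0 ⟨le_rfl, hT⟩).2
  have hq0 : 0 < ρ (i + 1) := hm.trans_le (hρ (i + 1) hi).1
  have hS := sigmaBar_nonneg hL (by positivity : 0 ≤ P / (8 * L))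
  have hhT : ∀ k < n, h k ≤ T := fun k hk => by
    linarith [tnode_add_le_of_mem_Icc hnode hk, (hnode k hk.le).1]
  have hhi := hh i hi
  have hD1 := costTerm_half_sub_le dR dF hL (hv _ (hnode i (by omega))) hhi (hhT i hi) hm
    (hρ i (by omega)) (hρ (i + 1) hi).1
  have hmid : tnode h i + h i / 2 ∈ Icc 0 T :=
    ⟨by linarith [(hnode i (by omega)).1, hhi.1],
      by linarith [tnode_add_le_of_mem_Icc hnode hi, hhi.1]⟩
  have hhalf : h i / 2 ∈ Icc 0 (1 / (4 * L)) := ⟨by linarith [hhi.1], by linarith [hhi.1, hhi.2]⟩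
  have hD2 := costTerm_quarter_le_of_quarter_le dR dF hL (hv _ hmid) hhalf
    (by linarith [hhT i hi, hhi.1] : h i / 2 ≤ T) hm (hρ (i + 1) hi) le_rfl
  rw [costCsub, if_neg (Nat.succ_ne_zero i), Nat.add_sub_cancel,
    costC_subdivide_sub L dR dF v h ρ hi, costIncreaseBound_eq]
  refine add_le_add (add_le_add hD1 hD2) ?_
  split_ifs with hin
  · have hD3 := costTerm_quarter_le dF hdR hL (hv _ (hnode (i + 1) hi)) (hh (i + 1) hin)
      (hhT (i + 1) hin) hm (hρ (i + 1) hi) (by positivity) (hρ (i + 2) hin).1 (hcoup (i + 1) hin)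
    have hold := costTerm_nonneg dR dF hL (hv _ (hnode (i + 1) hi)).1 (hh (i + 1) hin) hq0
      (hm.trans_le (hρ (i + 2) hin).1)
    linarith
  · positivity

end CostIncrease

theorem cost_increase_upper_bound (L P T : ℝ) (hL : 0 < L) (hP : 0 < P)
    (dR dF : ℕ) (hdR : 1 ≤ dR) (v : ℝ → ℝ) (V_U : ℝ)
    (hv : ∀ t ∈ Set.Icc (0:ℝ) T, 0 < v t)
    (hvU : ∀ t ∈ Set.Icc (0:ℝ) T, v t ≤ V_U)
    (n : ℕ) (h ρ : ℕ → ℝ)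
    (hpos : ∀ j < n, 0 < h j) (hsum : ∑ j ∈ Finset.range n, h j = T)
    (hbd : ∀ j < n, h j ≤ 1/(4*L))
    (ρpos : ∀ k ≤ n, 0 < ρ k) (ρbd : ∀ k ≤ n, ρ k ≤ P/(8*L))
    (coupling : ∀ j < n, ρ (j+1) = 2*L*P*(h j)^2)
    (j : ℕ) (hj : j ≤ n) :
    costCsub L dR dF v n h ρ j - costC L dR dF v n h ρ ≤
      ((Finset.range (n+1)).inf' ⟨0, by simp⟩ ρ) ^ (-(dR:ℝ) - (dF:ℝ)/2) *
        (2 * 4^(dR+dF+2) * sigmaFun L (1/(4*L)) (P/(8*L)) * V_U * T^dF / (ρ j ^ ((dF:ℝ)/2 + 1))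
          + 4^(dR+1) * sigmaFun L (1/(4*L)) (P/(8*L)) * V_U / ((2*L*P)^((dF:ℝ)/2) * ρ j)
          + 4^(dF+2) * sigmaFun L (1/(4*L)) (P/(8*L)) * V_U * T^dF / (ρ j ^ ((dF:ℝ)/2 + 1))) := by
  set m := (range (n + 1)).inf' ⟨0, by simp⟩ ρ
  have hm : 0 < m := (lt_inf'_iff _).mpr fun k hk => ρpos k (Nat.lt_succ_iff.mp (mem_range.mp hk))
  have hρ : ∀ k ≤ n, ρ k ∈ Icc m (P / (8 * L)) :=
    fun k hk => ⟨inf'_le ρ (mem_range.mpr (Nat.lt_succ_of_le hk)), ρbd k hk⟩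
  have hv' : ∀ t ∈ Icc 0 T, v t ∈ Icc 0 V_U := fun t ht => ⟨(hv t ht).le, hvU t ht⟩
  have hh : ∀ k < n, h k ∈ Icc 0 (1 / (4 * L)) := fun k hk => ⟨(hpos k hk).le, hbd k hk⟩
  have hnode : ∀ k ≤ n, tnode h k ∈ Icc 0 T := fun k hk => tnode_mem_Icc hpos hsum hk
  rcases j with _ | i
  · exact costCsub_zero_sub_le hdR hL hP hm hv' hh hnode hρ coupling
  · exact costCsub_succ_sub_le hdR hL hP hm hv' hh hnode hρ coupling hj
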